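/- arXiv:1607.07011 — 2 statements merged into one kernel-verified Lean document; each statement's English description precedes it below -/
import Mathlib

section
/- Let g ≥ 2 be an integer. For every integer k ≥ 1 and every integer n ≥ 2, l_g(n) ≤ g^k + ((k+1)/k) · log_g n. -/
/-- `IsGAddChain g a r d` says that `a 0 = 1, a 1, …, a r = d` is a `g`-addition chain
for `d`: each term `a i` (for `1 ≤ i ≤ r`) is a sum `a (j 1) + ⋯ + a (j k)` of `k`
earlier terms, where `2 ≤ k ≤ g` and `j 1 ≤ ⋯ ≤ j k ≤ i - 1`. -/
def IsGAddChain (g : ℕ) (a : ℕ → ℕ) (r : ℕ) (d : ℕ) : Prop :=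
  a 0 = 1 ∧ a r = d ∧
  ∀ i, 1 ≤ i → i ≤ r →
    ∃ k, 2 ≤ k ∧ k ≤ g ∧
      ∃ j : Fin k → ℕ, Monotone j ∧ (∀ t, j t ≤ i - 1) ∧
        a i = ∑ t, a (j t)

/-- `gAddChainLength g d` is `l_g(d)`, the length of a shortest `g`-addition chain for `d`. -/
noncomputable def gAddChainLength (g d : ℕ) : ℕ :=
  sInf {r | ∃ a : ℕ → ℕ, IsGAddChain g a r d}

/-- `nonzeroDigits m d` is `μ_m(d)`, the number of nonzero digits of `d` in base `m`. -/
def nonzeroDigits (m d : ℕ) : ℕ :=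
  ((Nat.digits m d).filter (· ≠ 0)).length

/-!
The `g^k`-ary method. Write `m = g ^ k` and `t = ⌊log_m n⌋`. A chain first lists all the
digits `1, 2, …, m - 1` (`m - 2` steps); then, running through the base-`m` digits of `n`
from the top, the current prefix `q` becomes `m * q + e` by `k` multiplications by `g` (each
a sum of `g` equal terms) and, when `e ≠ 0`, one addition of the tabulated digit `e`. This
costs at most `m - 2 + (k + 1) t` steps, and `k t ≤ log_g n` because `g ^ (k t) ≤ n`.
Values reached are tracked as the set `a '' Iic r` of all terms of a chain, not just its last
term: truncating a chain at any term gives a chain for that term.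
-/

open Set Function

def IsGSum (g : ℕ) (a : ℕ → ℕ) (r x : ℕ) : Prop :=
  ∃ k, 2 ≤ k ∧ k ≤ g ∧
    ∃ j : Fin k → ℕ, Monotone j ∧ (∀ t, j t ≤ r) ∧ x = ∑ t, a (j t)

section IsGSum

variable {g : ℕ} {a b : ℕ → ℕ} {r x : ℕ}

theorem IsGSum.congr (h : IsGSum g a r x) (hab : ∀ i ≤ r, b i = a i) : IsGSum g b r x := by
  obtain ⟨k, hk2, hkg, j, hj, hjr, rfl⟩ := h
  exact ⟨k, hk2, hkg, j, hj, hjr, Finset.sum_congr rfl fun t _ => (hab _ (hjr t)).symm⟩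

theorem isGSum_add (hg : 2 ≤ g) {p q : ℕ} (hp : p ≤ r) (hq : q ≤ r) :
    IsGSum g a r (a p + a q) := by
  wlog hpq : p ≤ q generalizing p q
  · rw [add_comm]
    exact this hq hp (le_of_not_ge hpq)
  refine ⟨2, le_rfl, hg, ![p, q], ?_, ?_, by simp⟩
  · intro s t hst
    fin_cases s <;> fin_cases t <;> simp_all
  · intro t
    fin_cases t <;> assumption

theorem isGSum_mul (hg : 2 ≤ g) {p : ℕ} (hp : p ≤ r) : IsGSum g a r (g * a p) :=
  ⟨g, hg, le_rfl, fun _ => p, monotone_const, fun _ => hp, by simp⟩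

end IsGSum

section IsGAddChain

variable {g : ℕ} {a : ℕ → ℕ} {r d : ℕ}

theorem IsGAddChain.isGSum (h : IsGAddChain g a r d) {i : ℕ} (hi : 1 ≤ i) (hir : i ≤ r) :
    IsGSum g a (i - 1) (a i) :=
  h.2.2 i hi hir

theorem IsGAddChain.trunc (h : IsGAddChain g a r d) {p : ℕ} (hp : p ≤ r) :
    IsGAddChain g a p (a p) :=
  ⟨h.1, rfl, fun _ hi hip => h.isGSum hi (hip.trans hp)⟩

theorem IsGAddChain.snoc (h : IsGAddChain g a r d) {x : ℕ} (hx : IsGSum g a r x) :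
    IsGAddChain g (update a (r + 1) x) (r + 1) x := by
  have hkeep : ∀ i ≤ r, update a (r + 1) x i = a i := fun i hi =>
    update_of_ne (by omega) _ _
  refine ⟨(hkeep 0 (Nat.zero_le _)).trans h.1, update_self .., fun i hi hir => ?_⟩
  rcases Nat.lt_or_eq_of_le hir with hir | rfl
  · rw [hkeep i (by omega)]
    exact (h.isGSum hi (by omega)).congr fun j hj => hkeep j (by omega)
  · rw [update_self]
    exact hx.congr hkeep

theorem image_Iic_subset_image_update {x : ℕ} :
    a '' Iic r ⊆ update a (r + 1) x '' Iic (r + 1) := by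
  rintro _ ⟨i, hi, rfl⟩
  exact ⟨i, Nat.le_succ_of_le hi, update_of_ne (by simp at hi; omega) _ _⟩

theorem gAddChainLength_le (h : IsGAddChain g a r d) : gAddChainLength g d ≤ r :=
  Nat.sInf_le ⟨a, h⟩

theorem gAddChainLength_le_of_mem_image (h : IsGAddChain g a r d) {x : ℕ}
    (hx : x ∈ a '' Iic r) : gAddChainLength g x ≤ r := by
  obtain ⟨p, hp, rfl⟩ := hx
  exact (gAddChainLength_le (h.trunc hp)).trans hp

theorem isGAddChain_succ (hg : 2 ≤ g) : IsGAddChain g (· + 1) r (r + 1) := by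
  refine ⟨rfl, rfl, fun i hi _ => ?_⟩
  show IsGSum g (· + 1) (i - 1) (i + 1)
  convert isGSum_add (a := (· + 1)) hg (Nat.zero_le (i - 1)) le_rfl using 1
  omega

theorem IsGAddChain.exists_mul_pow (hg : 2 ≤ g) (h : IsGAddChain g a r d) {x : ℕ}
    (hx : x ∈ a '' Iic r) (s : ℕ) :
    ∃ a' d', IsGAddChain g a' (r + s) d' ∧ a '' Iic r ⊆ a' '' Iic (r + s) ∧
      g ^ s * x ∈ a' '' Iic (r + s) := by
  induction s with
  | zero => exact ⟨a, d, h, subset_rfl, by simpa using hx⟩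
  | succ s ih =>
    obtain ⟨a', d', h', hsub, p, hp, hap⟩ := ih
    refine ⟨_, _, h'.snoc (isGSum_mul hg hp), hsub.trans image_Iic_subset_image_update,
      r + s + 1, self_mem_Iic, ?_⟩
    rw [update_self, hap, pow_succ']
    ring

theorem IsGAddChain.exists_append_digit (hg : 2 ≤ g) (h : IsGAddChain g a r d) (k : ℕ)
    {q e : ℕ} (hq : q ∈ a '' Iic r) (he : e = 0 ∨ e ∈ a '' Iic r) :
    ∃ a' r' d', IsGAddChain g a' r' d' ∧ r' ≤ r + k + 1 ∧ a '' Iic r ⊆ a' '' Iic r' ∧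
      e + g ^ k * q ∈ a' '' Iic r' := by
  obtain ⟨a', d', h', hsub, hmul⟩ := h.exists_mul_pow hg hq k
  rcases he with rfl | he
  · exact ⟨a', r + k, d', h', by omega, hsub, by simpa using hmul⟩
  obtain ⟨p, hp, rfl⟩ := hsub he
  obtain ⟨p', hp', hap'⟩ := hmul
  refine ⟨_, r + k + 1, _, h'.snoc (isGSum_add hg hp' hp), le_rfl,
    hsub.trans image_Iic_subset_image_update, r + k + 1, self_mem_Iic, ?_⟩
  rw [update_self, hap', add_comm]

end IsGAddChain

theorem exists_gAddChain_mAry {g k n : ℕ} (hg : 2 ≤ g) (hk : 1 ≤ k) (hn : 0 < n) :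
    ∃ a r d, IsGAddChain g a r d ∧ r ≤ g ^ k - 2 + (k + 1) * Nat.log (g ^ k) n ∧
      (∀ e, 0 < e → e < g ^ k → e ∈ a '' Iic r) ∧ n ∈ a '' Iic r := by
  set m := g ^ k
  have hm : 2 ≤ m := hg.trans (Nat.le_self_pow (by omega) g)
  induction n using Nat.strong_induction_on with
  | _ n ih =>
  rcases lt_or_ge n m with hnm | hmn
  · have hdigit : ∀ e, 0 < e → e < m → e ∈ (· + 1) '' Iic (m - 2) := fun e he hem =>
      ⟨e - 1, by simp only [mem_Iic]; omega, by simp only; omega⟩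
    exact ⟨_, m - 2, _, isGAddChain_succ hg, by omega, hdigit, hdigit n hn hnm⟩
  · have hq : 0 < n / m := Nat.div_pos hmn (by omega)
    obtain ⟨a, r, d, h, hr, htable, hnq⟩ := ih (n / m) (Nat.div_lt_self hn (by omega)) hq
    have he : n % m = 0 ∨ n % m ∈ a '' Iic r :=
      (Nat.eq_zero_or_pos _).imp_right fun he => htable _ he (Nat.mod_lt _ (by omega))
    obtain ⟨a', r', d', h', hr', hsub, hn'⟩ := h.exists_append_digit hg k hnq he
    have hlog : Nat.log m n = Nat.log m (n / m) + 1 := by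
      have := Nat.log_pos (b := m) (by omega) hmn
      rw [Nat.log_div_base]
      omega
    refine ⟨a', r', d', h', ?_, fun e he hem => hsub (htable e he hem), ?_⟩
    · rw [hlog, mul_add_one]
      omega
    · rwa [Nat.mod_add_div] at hn'

theorem gAddChainLength_le_mAry {g k n : ℕ} (hg : 2 ≤ g) (hk : 1 ≤ k) (hn : 0 < n) :
    gAddChainLength g n ≤ g ^ k - 2 + (k + 1) * Nat.log (g ^ k) n := by
  obtain ⟨a, r, d, h, hr, -, hna⟩ := exists_gAddChain_mAry hg hk hn
  exact (gAddChainLength_le_of_mem_image h hna).trans hr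

theorem mul_log_pow_le_logb {g : ℕ} (hg : 2 ≤ g) (k : ℕ) {n : ℕ} (hn : n ≠ 0) :
    (k : ℝ) * Nat.log (g ^ k) n ≤ Real.logb g n := by
  have hpow : g ^ (k * Nat.log (g ^ k) n) ≤ n := by
    rw [pow_mul]
    exact Nat.pow_log_le_self _ hn
  calc (k : ℝ) * Nat.log (g ^ k) n ≤ Nat.log g n := mod_cast Nat.le_log_of_pow_le hg hpow
    _ ≤ Real.logb g n := Real.natLog_le_logb n g

/-- for integers `g ≥ 2`, `k ≥ 1` and `n ≥ 2`,
`l_g(n) ≤ g ^ k + ((k + 1) / k) * log_g n` (real logarithm in base `g`). -/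
theorem gAddChainLength_le_pow_add (g k n : ℕ) (hg : 2 ≤ g) (hk : 1 ≤ k) (hn : 2 ≤ n) :
    (gAddChainLength g n : ℝ) ≤
      (g : ℝ) ^ k + (((k : ℝ) + 1) / (k : ℝ)) * Real.logb g n := by
  obtain ⟨t, ht⟩ : ∃ t, Nat.log (g ^ k) n = t := ⟨_, rfl⟩
  have hchain : (gAddChainLength g n : ℝ) ≤ (g : ℝ) ^ k + (k + 1) * t := by
    have := gAddChainLength_le_mAry hg hk (n := n) (by omega)
    rw [ht] at this
    exact_mod_cast (by omega : gAddChainLength g n ≤ g ^ k + (k + 1) * t)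
  have hlog : (k : ℝ) * t ≤ Real.logb g n := ht ▸ mul_log_pow_le_logb hg k (by omega)
  have hk0 : (k : ℝ) ≠ 0 := by positivity
  calc (gAddChainLength g n : ℝ) ≤ (g : ℝ) ^ k + (k + 1) * t := hchain
    _ = (g : ℝ) ^ k + (k + 1) / k * (k * t) := by field_simp
    _ ≤ (g : ℝ) ^ k + (k + 1) / k * Real.logb g n := by gcongr
end

section
/- Let g ≥ 3 be an integer. For almost all positive integers n, l_g(n) ≥ λ_g(n) + λ_g(n)/(8g · ln(g) · λ_g(λ_g(n))); that is, the set of positive integers n failing this inequality has natural density zero (the proportion of such n below x tends to 0 as x → ∞). -/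
open Finset Real Filter Topology

namespace IsGAddChain

variable {g r d : ℕ} {a : ℕ → ℕ}

theorem one_le (h : IsGAddChain g a r d) {i : ℕ} (hi : i ≤ r) : 1 ≤ a i := by
  induction i using Nat.strong_induction_on with
  | _ i ih =>
    rcases Nat.eq_zero_or_pos i with rfl | hi0
    · exact h.1.ge
    obtain ⟨k, hk2, -, j, -, hj, hsum⟩ := h.2.2 i hi0 hi
    have hj0 := hj ⟨0, by omega⟩
    rw [hsum]
    exact (ih (j ⟨0, by omega⟩) (by omega) (by omega)).trans
      (single_le_sum (f := fun t => a (j t)) (fun _ _ => Nat.zero_le _) (mem_univ _))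

theorem le_pow (h : IsGAddChain g a r d) {i : ℕ} (hi : i ≤ r) : a i ≤ g ^ i := by
  induction i using Nat.strong_induction_on with
  | _ i ih =>
    rcases Nat.eq_zero_or_pos i with rfl | hi0
    · simp [h.1]
    obtain ⟨k, hk2, hkg, j, -, hj, hsum⟩ := h.2.2 i hi0 hi
    have hterm : ∀ t, a (j t) ≤ g ^ (i - 1) := fun t =>
      (ih (j t) (by have := hj t; omega) (by have := hj t; omega)).trans
        (Nat.pow_le_pow_right (by omega) (hj t))
    calc a i = ∑ t, a (j t) := hsum
      _ ≤ k * g ^ (i - 1) := by simpa using sum_le_sum fun t (_ : t ∈ univ) => hterm t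
      _ ≤ g * g ^ (i - 1) := Nat.mul_le_mul_right _ hkg
      _ = g ^ i := by rw [← pow_succ', Nat.sub_add_cancel hi0]

theorem exists_sum_lt (h : IsGAddChain g a r d) {i : ℕ} (hi : i ≤ r) (hai : a i ≠ 1) :
    ∃ k ≤ g, ∃ j : Fin k → ℕ, (∀ t, j t ≤ r ∧ a (j t) < a i) ∧ a i = ∑ t, a (j t) := by
  have hi0 : 1 ≤ i := Nat.one_le_iff_ne_zero.2 fun h0 => hai (h0 ▸ h.1)
  obtain ⟨k, hk2, hkg, j, -, hj, hsum⟩ := h.2.2 i hi0 hi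
  refine ⟨k, hkg, j, fun t => ⟨(hj t).trans (by omega), ?_⟩, hsum⟩
  have : Nontrivial (Fin k) := Fin.nontrivial_iff_two_le.2 hk2
  obtain ⟨t', ht'⟩ := exists_ne t
  rw [hsum]
  exact single_lt_sum (f := fun t => a (j t)) ht' (mem_univ _) (mem_univ _)
    (h.one_le ((hj t').trans (by omega))) fun _ _ _ => Nat.zero_le _

end IsGAddChain

theorem isGAddChain_add_one {g d : ℕ} (hg : 2 ≤ g) (hd : 1 ≤ d) :
    IsGAddChain g (· + 1) (d - 1) d := by
  refine ⟨rfl, Nat.sub_add_cancel hd, fun i hi _ => ⟨2, le_rfl, hg, ![0, i - 1], ?_, ?_, ?_⟩⟩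
  · intro s t hst
    fin_cases s <;> fin_cases t <;> simp_all
  · intro t
    fin_cases t <;> simp
  · simp; omega

theorem exists_isGAddChain_gAddChainLength {g d : ℕ} (hg : 2 ≤ g) (hd : 1 ≤ d) :
    ∃ a, IsGAddChain g a (gAddChainLength g d) d :=
  Nat.sInf_mem (s := {r | ∃ a, IsGAddChain g a r d}) ⟨d - 1, _, isGAddChain_add_one hg hd⟩

theorem log_le_gAddChainLength {g d : ℕ} (hg : 2 ≤ g) (hd : 1 ≤ d) :
    Nat.log g d ≤ gAddChainLength g d := by
  obtain ⟨a, ha⟩ := exists_isGAddChain_gAddChainLength hg hd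
  have := ha.le_pow le_rfl
  rw [ha.2.1] at this
  simpa [Nat.log_pow (by omega : 1 < g)] using Nat.log_mono_right (b := g) this

/-- A nondecreasing chain `1 = b 0 ≤ b 1 ≤ ⋯ ≤ b q` whose step `i` fills `g` slots: slot `t`
holds `b (c i t - 1)` if `c i t ≠ 0` and is empty if `c i t = 0`. -/
structure IsSlotChain (g q : ℕ) (b : ℕ → ℕ) (c : ℕ → ℕ → ℕ) : Prop where
  zero : b 0 = 1
  monotoneOn : MonotoneOn b (Set.Iic q)
  code_le : ∀ i t, 1 ≤ i → i ≤ q → c i t ≤ i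
  eq_sum : ∀ i, 1 ≤ i → i ≤ q → b i = ∑ t ∈ range g, if c i t = 0 then 0 else b (c i t - 1)

theorem sum_range_dite_lt {M : Type*} [AddCommMonoid M] {k g : ℕ} (hk : k ≤ g) (f : Fin k → M) :
    ∑ t ∈ range g, (if h : t < k then f ⟨t, h⟩ else 0) = ∑ t, f t := by
  rw [← sum_range_add_sum_Ico _ hk, sum_range,
    sum_eq_zero (s := Ico k g) fun t ht => dif_neg (by simp at ht; omega), add_zero]
  exact sum_congr rfl fun t _ => dif_pos t.isLt

theorem exists_isSlotChain_of_steps {g q : ℕ} {b : ℕ → ℕ} (h0 : b 0 = 1)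
    (hmono : MonotoneOn b (Set.Iic q))
    (hstep : ∀ i, 1 ≤ i → i ≤ q →
      ∃ k ≤ g, ∃ v : Fin k → ℕ, (∀ t, v t < i) ∧ b i = ∑ t, b (v t)) :
    ∃ c, IsSlotChain g q b c := by
  have hcode : ∀ i, ∃ ci : ℕ → ℕ, 1 ≤ i → i ≤ q →
      (∀ t, ci t ≤ i) ∧ b i = ∑ t ∈ range g, if ci t = 0 then 0 else b (ci t - 1) := by
    intro i
    by_cases hi : 1 ≤ i ∧ i ≤ q
    · obtain ⟨k, hkg, v, hv, hsum⟩ := hstep i hi.1 hi.2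
      refine ⟨fun t => if h : t < k then v ⟨t, h⟩ + 1 else 0, fun _ _ => ⟨fun t => ?_, ?_⟩⟩
      · dsimp only
        split
        · exact hv _
        · exact Nat.zero_le _
      · rw [hsum, ← sum_range_dite_lt hkg]
        refine sum_congr rfl fun t _ => ?_
        split <;> simp_all
    · exact ⟨0, fun h1 h2 => absurd ⟨h1, h2⟩ hi⟩
  choose c hc using hcode
  exact ⟨c, h0, hmono, fun i t h1 h2 => (hc i h1 h2).1 t, fun i h1 h2 => (hc i h1 h2).2⟩

namespace IsGAddChain

variable {g r n : ℕ} {a : ℕ → ℕ}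

/-- Sort the value set `S` of the chain: `b := Nat.nth (· ∈ S)`, so that a value `x` has index
`Nat.count (· ∈ S) x`. -/
theorem exists_isSlotChain (h : IsGAddChain g a r n) :
    ∃ q ≤ r, ∃ b c, IsSlotChain g q b c ∧ b q = n := by
  classical
  set S := (range (r + 1)).image a
  have hmemS : ∀ x, x ∈ S ↔ ∃ i ≤ r, a i = x := by simp [S]
  have hS1 : ∀ x ∈ S, 1 ≤ x := fun x hx => by
    obtain ⟨i, hi, rfl⟩ := (hmemS x).1 hx
    exact h.one_le hi
  have hnS : n ∈ S := (hmemS n).2 ⟨r, le_rfl, h.2.1⟩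
  have hfin : (Set.ofPred (· ∈ S)).Finite := S.finite_toSet
  set b := Nat.nth (· ∈ S)
  set q := Nat.count (· ∈ S) n
  have hbq : b q = n := Nat.nth_count hnS
  have hqcard : q < #hfin.toFinset := Nat.count_lt_card hfin hnS
  have hqr : q ≤ r := by
    have : #hfin.toFinset ≤ r + 1 := by
      rw [show hfin.toFinset = S by ext; simp]
      exact card_image_le.trans_eq (card_range _)
    omega
  have hmem : ∀ i ≤ q, b i ∈ S := fun i hi =>
    Nat.nth_mem_anti (p := (· ∈ S)) hi (show b q ∈ S by rw [hbq]; exact hnS)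
  have hstrict : StrictMonoOn b (Set.Iic q) := (Nat.nth_strictMonoOn hfin).mono
    fun i (hi : i ≤ q) => show i < _ by omega
  have hcount : ∀ i ≤ q, Nat.count (· ∈ S) (b i) = i := fun i hi =>
    Nat.count_nth_of_lt_card_finite hfin (by omega)
  have hb0 : b 0 = 1 := by
    have h1S : 1 ∈ S := (hmemS 1).2 ⟨0, Nat.zero_le _, h.1⟩
    have hle : Nat.count (· ∈ S) 1 ≤ q := Nat.count_monotone _ (hS1 n hnS)
    have := hstrict.monotoneOn (show 0 ≤ q from Nat.zero_le _) hle (Nat.zero_le _)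
    rw [show b (Nat.count (· ∈ S) 1) = 1 from Nat.nth_count h1S] at this
    exact le_antisymm this (hS1 _ (hmem 0 (Nat.zero_le _)))
  obtain ⟨c, hc⟩ := exists_isSlotChain_of_steps (g := g) hb0 hstrict.monotoneOn fun i hi1 hiq => by
    obtain ⟨i₀, hi₀r, hai₀⟩ := (hmemS _).1 (hmem i hiq)
    have hne : a i₀ ≠ 1 := by
      rw [hai₀, ← hb0]
      exact (hstrict (Nat.zero_le q) hiq (by omega)).ne'
    obtain ⟨k, hkg, j, hj, hsum⟩ := h.exists_sum_lt hi₀r hne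
    have hjS : ∀ t, a (j t) ∈ S := fun t => (hmemS _).2 ⟨j t, (hj t).1, rfl⟩
    refine ⟨k, hkg, fun t => Nat.count (· ∈ S) (a (j t)), fun t => ?_, ?_⟩
    · rw [← hcount i hiq, ← hai₀]
      exact Nat.count_strict_mono (hjS t) (hj t).2
    · rw [← hai₀, hsum]
      exact sum_congr rfl fun t _ => (Nat.nth_count (hjS t)).symm
  exact ⟨q, hqr, b, c, hc, hbq⟩

end IsGAddChain

/-- The slots of step `i` that do not hold `b (i - 1)`. -/
def deviantSlots (g : ℕ) (c : ℕ → ℕ → ℕ) (i : ℕ) : Finset ℕ :=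
  (range g).filter (c i · ≠ i)

def deviantCodes (g q : ℕ) (c : ℕ → ℕ → ℕ) : Finset ((ℕ × ℕ) × ℕ) :=
  ((Icc 1 q ×ˢ range g).filter fun p => c p.1 p.2 ≠ p.1).image fun p => (p, c p.1 p.2)

theorem mem_deviantCodes {g q : ℕ} {c : ℕ → ℕ → ℕ} {i t v : ℕ} :
    ((i, t), v) ∈ deviantCodes g q c ↔ (1 ≤ i ∧ i ≤ q) ∧ t < g ∧ c i t ≠ i ∧ c i t = v := by
  simp [deviantCodes, and_assoc]

theorem card_deviantCodes_le (g q : ℕ) (c : ℕ → ℕ → ℕ) :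
    #(deviantCodes g q c) ≤ ∑ i ∈ Icc 1 q, #(deviantSlots g c i) := by
  refine card_image_le.trans_eq ?_
  simp only [card_filter, sum_product, deviantSlots]

theorem deviantCodes_subset {g q R : ℕ} {c : ℕ → ℕ → ℕ}
    (hc : ∀ i t, 1 ≤ i → i ≤ q → c i t ≤ i) (hqR : q ≤ R) :
    deviantCodes g q c ⊆ (Icc 1 R ×ˢ range g) ×ˢ range (R + 1) := by
  rintro ⟨⟨i, t⟩, v⟩ hp
  obtain ⟨⟨hi1, hiq⟩, htg, -, rfl⟩ := mem_deviantCodes.1 hp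
  have := hc i t hi1 hiq
  simp only [mem_product, mem_Icc, mem_range]
  omega

namespace IsSlotChain

variable {g q : ℕ} {b : ℕ → ℕ} {c : ℕ → ℕ → ℕ}

theorem one_le (h : IsSlotChain g q b c) {i : ℕ} (hi : i ≤ q) : 1 ≤ b i :=
  h.zero ▸ h.monotoneOn (Nat.zero_le q) hi (Nat.zero_le i)

theorem slot_le (h : IsSlotChain g q b c) {i t j : ℕ} (hj : j ≤ q) (hcj : c i t ≤ j + 1) :
    (if c i t = 0 then 0 else b (c i t - 1)) ≤ b j := by
  split
  · exact Nat.zero_le _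
  · exact h.monotoneOn (show c i t - 1 ≤ q by omega) hj (by omega)

theorem le_mul_prev (h : IsSlotChain g q b c) {i : ℕ} (hi1 : 1 ≤ i) (hiq : i ≤ q) :
    b i ≤ g * b (i - 1) := by
  rw [h.eq_sum i hi1 hiq]
  simpa using sum_le_sum fun t (_ : t ∈ range g) =>
    h.slot_le (i := i) (t := t) (j := i - 1) (by omega) (by have := h.code_le i t hi1 hiq; omega)

/-- Non-deviant slots contribute at most `b (i - 1)` each, deviant ones at most `b (i - 2)`. -/
theorem le_deviantSlots (h : IsSlotChain g q b c) {i : ℕ} (hi2 : 2 ≤ i) (hiq : i ≤ q) :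
    (b i : ℝ) ≤ (g - #(deviantSlots g c i)) * b (i - 1) + #(deviantSlots g c i) * b (i - 2) := by
  set A := (range g).filter (c i · = i)
  have hcard : (#A : ℝ) = g - #(deviantSlots g c i) := by
    have := card_filter_add_card_filter_not (s := range g) (p := (c i · = i))
    rw [card_range] at this
    rw [eq_sub_iff_add_eq]
    exact_mod_cast this
  have hle : b i ≤ #A * b (i - 1) + #(deviantSlots g c i) * b (i - 2) := by
    rw [h.eq_sum i (by omega) hiq, ← sum_filter_add_sum_filter_not (range g) (c i · = i)]
    change _ + ∑ t ∈ deviantSlots g c i, _ ≤ _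
    refine add_le_add ?_ ?_
    · simpa using sum_le_sum fun t (_ : t ∈ A) =>
        h.slot_le (i := i) (t := t) (j := i - 1) (by omega)
          (by have := h.code_le i t (by omega) hiq; omega)
    · simpa using sum_le_sum fun t (ht : t ∈ deviantSlots g c i) =>
        h.slot_le (i := i) (t := t) (j := i - 2) (by omega)
          (by have := h.code_le i t (by omega) hiq; simp [deviantSlots] at ht; omega)
  rw [← hcard]
  exact_mod_cast hle

theorem eqOn_of_deviantCodes_eq {b' : ℕ → ℕ} {c' : ℕ → ℕ → ℕ} (h : IsSlotChain g q b c)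
    (h' : IsSlotChain g q b' c') (hD : deviantCodes g q c = deviantCodes g q c') :
    ∀ i ≤ q, b i = b' i := by
  intro i
  induction i using Nat.strong_induction_on with
  | _ i ih =>
    intro hiq
    rcases Nat.eq_zero_or_pos i with rfl | hi1
    · rw [h.zero, h'.zero]
    have hcode : ∀ t < g, c i t = c' i t := by
      intro t ht
      have key : ∀ v, (c i t ≠ i ∧ c i t = v) ↔ (c' i t ≠ i ∧ c' i t = v) := fun v => by
        simpa [mem_deviantCodes, Nat.one_le_of_lt hi1, hiq, ht] using
          congrArg (((i, t), v) ∈ ·) hD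
      by_cases hci : c i t = i
      · by_contra hne
        exact (((key _).2 ⟨fun e => hne (hci.trans e.symm), rfl⟩).1) hci
      · exact ((key _).1 ⟨hci, rfl⟩).2.symm
    rw [h.eq_sum i hi1 hiq, h'.eq_sum i hi1 hiq]
    refine sum_congr rfl fun t ht => ?_
    rw [← hcode t (mem_range.1 ht)]
    split
    · rfl
    · have := h.code_le i t hi1 hiq
      exact ih _ (by omega) (by omega)

end IsSlotChain

/-- `x, y, z` are consecutive chain terms and `m` counts the deviant slots of the step producing
`z`. If `2 x ≤ y`, the deficit `log G - log (z / y)` of that step pays for `m`; otherwise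
`y / x < 2 ≤ G / (3 / 2)`, so the deficit of the previous step is at least `log (3 / 2) > 2 / 5`. -/
theorem le_deficits_of_step {G m x y z : ℝ} (hG : 3 ≤ G) (hm : 0 ≤ m) (hmG : m ≤ G) (hx : 0 < x)
    (hxy : x ≤ y) (hyx : y ≤ G * x) (hz : 0 < z) (hzy : z ≤ (G - m) * y + m * x) :
    m ≤ 2 * G * (log G - (log z - log y)) + 5 / 2 * G * (log G - (log y - log x)) := by
  have hy : 0 < y := hx.trans_le hxy
  have hGpos : 0 < G := by linarith
  have hdef₁ : 0 ≤ log G - (log z - log y) := by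
    have : log z ≤ log (G * y) := log_le_log hz (by nlinarith)
    rw [log_mul hGpos.ne' hy.ne'] at this
    linarith
  have hdef₀ : 0 ≤ log G - (log y - log x) := by
    have : log y ≤ log (G * x) := log_le_log hy hyx
    rw [log_mul hGpos.ne' hx.ne'] at this
    linarith
  rcases le_or_gt (2 * x) y with hxy2 | hyx2
  · have hGm : 0 < G - m / 2 := by linarith
    have hlogz : log z ≤ log (G - m / 2) + log y := by
      rw [← log_mul hGm.ne' hy.ne']
      exact log_le_log hz (by nlinarith)
    have hlogGm : log (G - m / 2) ≤ log G - m / (2 * G) := by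
      have := log_le_sub_one_of_pos (div_pos hGm hGpos)
      rw [log_div hGm.ne' hGpos.ne'] at this
      have e : (G - m / 2) / G - 1 = -(m / (2 * G)) := by field_simp; ring
      linarith
    have : m ≤ 2 * G * (log G - (log z - log y)) := by
      have h2G : m = 2 * G * (m / (2 * G)) := by field_simp
      rw [h2G]
      exact mul_le_mul_of_nonneg_left (by linarith) (by linarith)
    nlinarith
  · have hlog2 : log y - log x ≤ log 2 := by
      rw [← log_div hy.ne' hx.ne']
      exact log_le_log (div_pos hy hx) ((div_le_iff₀ hx).2 (by linarith))
    have hlog3 : log 3 ≤ log G := log_le_log (by norm_num) hG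
    have : 2 / 5 ≤ log G - (log y - log x) := by
      linarith [log_three_gt_d9, log_two_lt_d9]
    nlinarith

namespace IsSlotChain

variable {g q : ℕ} {b : ℕ → ℕ} {c : ℕ → ℕ → ℕ}

/-- The deficits `log g - log (b (i + 1) / b i)` telescope to `q log g - log (b q)`. -/
theorem sum_card_deviantSlots_le (h : IsSlotChain g q b c) (hg : 3 ≤ g) :
    (∑ i ∈ Icc 1 q, #(deviantSlots g c i) : ℝ) ≤ g + 9 / 2 * g * (q * log g - log (b q)) := by
  set d : ℕ → ℝ := fun i => log g - (log (b (i + 1)) - log (b i))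
  set m : ℕ → ℝ := fun i => #(deviantSlots g c i)
  have hbpos : ∀ i ≤ q, (0 : ℝ) < b i := fun i hi => by exact_mod_cast h.one_le hi
  have hm : ∀ i, 0 ≤ m i ∧ m i ≤ g := fun i => ⟨by positivity, by
    simp only [m]
    exact_mod_cast (card_filter_le _ _).trans_eq (card_range g)⟩
  have hd : ∀ i < q, 0 ≤ d i := fun i hi => by
    have := log_le_log (hbpos _ hi) (show (b (i + 1) : ℝ) ≤ g * b i by
      exact_mod_cast h.le_mul_prev (i := i + 1) (by omega) hi)
    rw [log_mul (by positivity) (hbpos i hi.le).ne'] at this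
    simp only [d]
    linarith
  have hdsum : ∑ i ∈ range q, d i = q * log g - log (b q) := by
    simp only [d, sum_sub_distrib, sum_range_sub (fun i => log (b i)), h.zero]
    simp
  have hstep : ∀ i, i + 2 ≤ q → m (i + 2) ≤ 2 * g * d (i + 1) + 5 / 2 * g * d i := fun i hi =>
    le_deficits_of_step (by exact_mod_cast hg) (hm _).1 (hm _).2 (hbpos i (by omega))
      (by exact_mod_cast h.monotoneOn (by simp; omega) (by simp; omega) (by omega))
      (by exact_mod_cast h.le_mul_prev (i := i + 1) (by omega) (by omega))
      (hbpos _ hi) (h.le_deviantSlots (i := i + 2) (by omega) hi)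
  have hshift : ∑ i ∈ Icc 1 q, m i = ∑ k ∈ range q, m (k + 1) := by
    rw [← Ico_add_one_right_eq_Icc, sum_Ico_eq_sum_range, Nat.add_sub_cancel]
    simp only [add_comm 1]
  change ∑ i ∈ Icc 1 q, m i ≤ _
  rw [hshift, ← hdsum]
  rcases q with _ | n
  · simp
  have h1 : ∑ k ∈ range n, m (k + 1 + 1) ≤
      2 * g * ∑ k ∈ range n, d (k + 1) + 5 / 2 * g * ∑ k ∈ range n, d k := by
    rw [mul_sum, mul_sum, ← sum_add_distrib]
    exact sum_le_sum fun k hk => hstep k (by simp at hk; omega)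
  have h2 : ∑ k ∈ range n, d k + d n = ∑ k ∈ range n, d (k + 1) + d 0 := by
    rw [← sum_range_succ, ← sum_range_succ']
  rw [sum_range_succ', sum_range_succ' d]
  have := (hm (0 + 1)).2
  have hg0 : (0 : ℝ) ≤ g := by positivity
  have := mul_nonneg hg0 (hd n (by omega))
  have := mul_nonneg hg0 (hd 0 (by omega))
  nlinarith

end IsSlotChain

theorem card_filter_powerset_card_le {α : Type*} (s : Finset α) (M : ℕ) :
    #(s.powerset.filter (#· ≤ M)) ≤ ∑ k ∈ range (M + 1), (#s).choose k := by
  classical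
  calc #(s.powerset.filter (#· ≤ M))
      ≤ #((range (M + 1)).biUnion fun k => s.powersetCard k) := card_le_card fun t ht => by
        simp only [mem_filter, mem_powerset] at ht
        simp only [mem_biUnion, mem_range, mem_powersetCard]
        exact ⟨#t, by omega, ht.1, rfl⟩
    _ ≤ ∑ k ∈ range (M + 1), #(s.powersetCard k) := card_biUnion_le
    _ = ∑ k ∈ range (M + 1), (#s).choose k := by simp only [card_powersetCard]

/-- `C(N, k) ≤ N ^ k / k! ≤ (X / M) ^ M * M ^ k / k!` for `k ≤ M ≤ X`, and `∑ M ^ k / k! ≤ e ^ M`. -/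
theorem sum_range_choose_le_pow {N M : ℕ} {X : ℝ} (hM : 0 < M) (hNX : N ≤ X) (hMX : M ≤ X) :
    ∑ k ∈ range (M + 1), (N.choose k : ℝ) ≤ (exp 1 * X / M) ^ M := by
  have hMpos : (0 : ℝ) < M := by exact_mod_cast hM
  have hXM : 1 ≤ X / M := (one_le_div hMpos).2 hMX
  calc ∑ k ∈ range (M + 1), (N.choose k : ℝ)
      ≤ ∑ k ∈ range (M + 1), (X / M) ^ M * ((M : ℝ) ^ k / k.factorial) :=
        sum_le_sum fun k hk => by
          have hk : k ≤ M := Nat.lt_succ_iff.1 (mem_range.1 hk)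
          calc (N.choose k : ℝ) ≤ (N : ℝ) ^ k / k.factorial := Nat.choose_le_pow_div k N
            _ ≤ X ^ k / k.factorial := by gcongr
            _ = (X / M) ^ k * ((M : ℝ) ^ k / k.factorial) := by
              rw [div_pow]; field_simp
            _ ≤ (X / M) ^ M * ((M : ℝ) ^ k / k.factorial) :=
              mul_le_mul_of_nonneg_right (pow_le_pow_right₀ hXM hk) (by positivity)
    _ = (X / M) ^ M * ∑ k ∈ range (M + 1), (M : ℝ) ^ k / k.factorial := by rw [mul_sum]
    _ ≤ (X / M) ^ M * exp M := by gcongr; exact sum_le_exp_of_nonneg hMpos.le _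
    _ = (exp 1 * X / M) ^ M := by
      rw [mul_div_assoc, mul_pow, ← exp_nat_mul, mul_one, mul_comm]

/-- The exceptions to the theorem in the block `[g ^ lam, g ^ (lam + 1))`, on which
`Nat.log g n = lam`. -/
noncomputable def badSet (g lam : ℕ) : Finset ℕ :=
  (Ico (g ^ lam) (g ^ (lam + 1))).filter fun n =>
    (gAddChainLength g n : ℝ) < lam + lam / (8 * g * log g * Nat.log g lam)

noncomputable def chainExcess (g lam : ℕ) : ℕ :=
  ⌈(lam : ℝ) / (8 * g * log g * Nat.log g lam)⌉₊

noncomputable def deviantBudget (g lam : ℕ) : ℕ :=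
  g + ⌈9 / 2 * g * log g * chainExcess g lam⌉₊

theorem exists_isSlotChain_of_mem_badSet {g lam n : ℕ} (hg : 3 ≤ g) (hn : n ∈ badSet g lam) :
    ∃ q ≤ lam + chainExcess g lam, ∃ b c, IsSlotChain g q b c ∧ b q = n ∧
      #(deviantCodes g q c) ≤ deviantBudget g lam := by
  obtain ⟨⟨hlo, hhi⟩, hlen⟩ : (g ^ lam ≤ n ∧ n < g ^ (lam + 1)) ∧ _ := by
    simpa [badSet] using hn
  have hn1 : 1 ≤ n := (Nat.one_le_pow _ _ (by omega)).trans hlo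
  set s := chainExcess g lam
  have hlen : gAddChainLength g n ≤ lam + s := by
    have : (gAddChainLength g n : ℝ) < lam + s := hlen.trans_le (by gcongr; exact Nat.le_ceil _)
    exact_mod_cast this.le
  obtain ⟨a, ha⟩ := exists_isGAddChain_gAddChainLength (g := g) (by omega) hn1
  obtain ⟨q, hq, b, c, hbc, hbq⟩ := ha.exists_isSlotChain
  refine ⟨q, hq.trans hlen, b, c, hbc, hbq, ?_⟩
  have hlogn : lam * log g ≤ log (b q) := by
    rw [hbq, ← log_pow]
    exact log_le_log (by positivity) (by exact_mod_cast hlo)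
  have hq' : (q : ℝ) ≤ lam + s := by exact_mod_cast hq.trans hlen
  have hlogg : 0 ≤ log g := log_nonneg (by exact_mod_cast (by omega : 1 ≤ g))
  have hsum : (∑ i ∈ Icc 1 q, #(deviantSlots g c i) : ℝ) ≤ g + 9 / 2 * g * log g * s := by
    refine (hbc.sum_card_deviantSlots_le hg).trans ?_
    have : (q : ℝ) * log g - log (b q) ≤ s * log g := by nlinarith
    nlinarith [mul_le_mul_of_nonneg_left this (by positivity : (0 : ℝ) ≤ 9 / 2 * g)]
  have : (#(deviantCodes g q c) : ℝ) ≤ deviantBudget g lam := by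
    have := Nat.le_ceil (9 / 2 * g * log g * (s : ℝ))
    have hcodes : (#(deviantCodes g q c) : ℝ) ≤ ∑ i ∈ Icc 1 q, (#(deviantSlots g c i) : ℝ) := by
      exact_mod_cast card_deviantCodes_le g q c
    simp only [deviantBudget]
    push_cast
    linarith
  exact_mod_cast this

theorem card_badSet_le {g : ℕ} (hg : 3 ≤ g) (lam : ℕ) :
    #(badSet g lam) ≤ (lam + chainExcess g lam + 1) * ∑ k ∈ range (deviantBudget g lam + 1),
      ((lam + chainExcess g lam) * g * (lam + chainExcess g lam + 1)).choose k := by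
  classical
  set R := lam + chainExcess g lam
  set grid := (Icc 1 R ×ˢ range g) ×ˢ range (R + 1)
  have key : ∀ n, ∃ q b c, n ∈ badSet g lam → q ≤ R ∧ IsSlotChain g q b c ∧ b q = n ∧
      #(deviantCodes g q c) ≤ deviantBudget g lam := fun n => by
    by_cases hn : n ∈ badSet g lam
    · obtain ⟨q, hq, b, c, h⟩ := exists_isSlotChain_of_mem_badSet hg hn
      exact ⟨q, b, c, fun _ => ⟨hq, h⟩⟩
    · exact ⟨0, 0, 0, fun h => absurd h hn⟩
  choose q b c hqbc using key
  calc #(badSet g lam)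
      ≤ #(range (R + 1) ×ˢ grid.powerset.filter (#· ≤ deviantBudget g lam)) := by
        refine card_le_card_of_injOn (fun n => (q n, deviantCodes g (q n) (c n))) ?_ ?_
        · intro n hn
          obtain ⟨hq, hbc, -, hcard⟩ := hqbc n hn
          simp only [coe_product, Set.mem_prod, mem_coe, mem_range, mem_filter, mem_powerset]
          exact ⟨by omega, deviantCodes_subset hbc.code_le hq, hcard⟩
        · intro n hn n' hn' heq
          obtain ⟨-, hbc, hbq, -⟩ := hqbc n hn
          obtain ⟨-, hbc', hbq', -⟩ := hqbc n' hn'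
          obtain ⟨hqq, hD⟩ := Prod.mk.inj heq
          rw [← hbq, ← hbq', ← hqq]
          rw [← hqq] at hbc' hD
          exact hbc.eqOn_of_deviantCodes_eq hbc' hD _ le_rfl
    _ ≤ (R + 1) * ∑ k ∈ range (deviantBudget g lam + 1), (R * g * (R + 1)).choose k := by
        rw [card_product, card_range]
        refine Nat.mul_le_mul_left _ ((card_filter_powerset_card_le _ _).trans_eq ?_)
        simp [grid]

theorem log_exp_mul_sq_div_le {lam L M C : ℝ} (hlam : 0 < lam) (hL : 0 < L) (hC : 0 < C)
    (hM : 9 / 16 * lam / L ≤ M) :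
    log (exp 1 * (C * lam ^ 2) / M) ≤ 1 + log C + log (16 / 9) + log lam + log L := by
  have hx : 0 < 9 / 16 * lam / L := by positivity
  have hlogM : log (9 / 16 * lam / L) ≤ log M := log_le_log hx hM
  rw [log_div (by positivity) hL.ne', log_mul (by norm_num) hlam.ne'] at hlogM
  rw [log_div (by positivity) (hx.trans_le hM).ne', log_mul (by positivity) (by positivity),
    log_exp, log_mul hC.ne' (by positivity), log_pow]
  have : log (9 / 16 : ℝ) = -log (16 / 9) := by rw [← log_inv]; norm_num
  push_cast
  linarith

theorem log_add_mul_log_le {ℓ lam L R M C D : ℝ} (hlam : 1 ≤ lam) (hL : 1 ≤ L) (hLlam : L ≤ lam)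
    (hloglam : log lam ≤ (L + 1) * ℓ) (hR : 0 ≤ R) (hR2 : R ≤ 2 * lam)
    (hM : 9 / 16 * lam / L ≤ M) (hM' : M ≤ 9 / 16 * lam / L + D) (hC : 1 ≤ C) :
    log (R + 1) + M * log (exp 1 * (C * lam ^ 2) / M) ≤
      lam * (9 / 16 * ℓ + (9 / 16 * (ℓ + (1 + log C + log (16 / 9))) + 9 / 16 * log L) / L) +
        (D * (1 + log C + log (16 / 9)) + log 3 + (2 * D + 1) * log lam) := by
  set K := 1 + log C + log (16 / 9)
  have hlampos : 0 < lam := by linarith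
  have hLpos : 0 < L := by linarith
  have hx : 0 < 9 / 16 * lam / L := by positivity
  have hMpos : 0 < M := hx.trans_le hM
  have hloglam0 : 0 ≤ log lam := log_nonneg hlam
  have hlogL : 0 ≤ log L := log_nonneg hL
  have hlogLlam : log L ≤ log lam := log_le_log hLpos hLlam
  have hK : 1 ≤ K := by
    have := log_nonneg hC
    have : 0 ≤ log (16 / 9 : ℝ) := log_nonneg (by norm_num)
    linarith
  have hF := log_exp_mul_sq_div_le (C := C) hlampos hLpos (by linarith) hM
  have hR1 : log (R + 1) ≤ log 3 + log lam := by
    rw [← log_mul (by norm_num) hlampos.ne']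
    exact log_le_log (by linarith) (by linarith)
  have hmain : 9 / 16 * lam / L * (K + log lam + log L) ≤
      lam * (9 / 16 * ℓ + (9 / 16 * (ℓ + K) + 9 / 16 * log L) / L) := by
    have e : 9 / 16 * lam / L * (K + log lam + log L) =
        9 / 16 * lam * ((K + log L) / L) + 9 / 16 * lam * (log lam / L) := by
      field_simp
      ring
    have : log lam / L ≤ ℓ + ℓ / L := by
      rw [div_le_iff₀ hLpos]
      calc log lam ≤ (L + 1) * ℓ := hloglam
        _ = (ℓ + ℓ / L) * L := by field_simp
    rw [e]
    calc 9 / 16 * lam * ((K + log L) / L) + 9 / 16 * lam * (log lam / L)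
        ≤ 9 / 16 * lam * ((K + log L) / L) + 9 / 16 * lam * (ℓ + ℓ / L) := by gcongr
      _ = lam * (9 / 16 * ℓ + (9 / 16 * (ℓ + K) + 9 / 16 * log L) / L) := by ring
  have hF0 : 0 ≤ K + log lam + log L := by linarith
  calc log (R + 1) + M * log (exp 1 * (C * lam ^ 2) / M)
      ≤ (log 3 + log lam) + (9 / 16 * lam / L + D) * (K + log lam + log L) := by
        refine add_le_add hR1 ?_
        exact (mul_le_mul_of_nonneg_left hF hMpos.le).trans
          (mul_le_mul_of_nonneg_right hM' hF0)
    _ ≤ _ := by nlinarith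

theorem tendsto_const_add_mul_log_div_atTop (a b : ℝ) :
    Tendsto (fun x : ℝ => (a + b * log x) / x) atTop (𝓝 0) := by
  have h := (tendsto_const_nhds (x := a)).div_atTop tendsto_id |>.add
    ((isLittleO_log_id_atTop.tendsto_div_nhds_zero).const_mul b)
  simp only [add_zero, mul_zero] at h
  refine h.congr' ?_
  filter_upwards [eventually_gt_atTop 0] with x hx
  simp only [id]
  field_simp

theorem tendsto_div_pow_of_le_exp {a : ℕ → ℝ} {G c : ℝ} (hG : 0 < G) (hc : c < log G)
    (ha : ∀ n, 0 ≤ a n) (h : ∀ᶠ n in atTop, a n ≤ exp (n * c)) :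
    Tendsto (fun n => a n / G ^ n) atTop (𝓝 0) := by
  have hlim : Tendsto (fun n : ℕ => exp (c - log G) ^ n) atTop (𝓝 0) :=
    tendsto_pow_atTop_nhds_zero_of_lt_one (exp_pos _).le (exp_lt_one_iff.2 (by linarith))
  refine squeeze_zero' (Eventually.of_forall fun n => by have := ha n; positivity) ?_ hlim
  filter_upwards [h] with n hn
  rw [← exp_nat_mul, mul_sub, exp_sub, ← log_pow, exp_log (by positivity)]
  gcongr

theorem one_le_log_of_three_le {g : ℕ} (hg : 3 ≤ g) : 1 ≤ log g :=
  (by linarith [log_three_gt_d9] : (1 : ℝ) ≤ log 3).trans (log_le_log (by norm_num) (by exact_mod_cast hg))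

section Parameters

variable {g lam : ℕ}

theorem chainExcess_bounds (hg : 3 ≤ g) (hL : 1 ≤ Nat.log g lam) :
    (lam : ℝ) / (8 * g * log g * Nat.log g lam) ≤ chainExcess g lam ∧
      (chainExcess g lam : ℝ) ≤ lam / (8 * g * log g * Nat.log g lam) + 1 ∧
      chainExcess g lam ≤ lam := by
  have hden : 1 ≤ 8 * g * log g * Nat.log g lam := by
    have := one_le_log_of_three_le hg
    have : (3 : ℝ) ≤ g := by exact_mod_cast hg
    have : (1 : ℝ) ≤ Nat.log g lam := by exact_mod_cast hL
    have : (1 : ℝ) ≤ log g * Nat.log g lam := by nlinarith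
    nlinarith
  refine ⟨Nat.le_ceil _, (Nat.ceil_lt_add_one (by positivity)).le, ?_⟩
  have : (lam : ℝ) / (8 * g * log g * Nat.log g lam) ≤ lam :=
    div_le_self (Nat.cast_nonneg _) hden
  exact (Nat.ceil_le_ceil this).trans_eq (Nat.ceil_natCast lam)

theorem deviantBudget_bounds (hg : 3 ≤ g) (hL : 1 ≤ Nat.log g lam) :
    9 / 16 * lam / Nat.log g lam ≤ (deviantBudget g lam : ℝ) ∧
      (deviantBudget g lam : ℝ) ≤ 9 / 16 * lam / Nat.log g lam + (g + 9 / 2 * g * log g + 1) := by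
  obtain ⟨hs, hs', -⟩ := chainExcess_bounds hg hL
  have hlog := one_le_log_of_three_le hg
  have hLpos : (0 : ℝ) < Nat.log g lam := by exact_mod_cast hL
  have hgpos : (0 : ℝ) < g := by positivity
  have e : 9 / 2 * g * log g * ((lam : ℝ) / (8 * g * log g * Nat.log g lam)) =
      9 / 16 * lam / Nat.log g lam := by
    field_simp
    ring
  have hc := Nat.le_ceil (9 / 2 * g * log g * (chainExcess g lam : ℝ))
  have hc' := Nat.ceil_lt_add_one (show 0 ≤ 9 / 2 * g * log g * (chainExcess g lam : ℝ) by positivity)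
  have h1 := mul_le_mul_of_nonneg_left hs (by positivity : (0 : ℝ) ≤ 9 / 2 * g * log g)
  have h2 := mul_le_mul_of_nonneg_left hs' (by positivity : (0 : ℝ) ≤ 9 / 2 * g * log g)
  simp only [deviantBudget]
  push_cast
  constructor <;> nlinarith

theorem card_badSet_le_pow (hg : 3 ≤ g) (hL : 1 ≤ Nat.log g lam) :
    (#(badSet g lam) : ℝ) ≤ (((lam + chainExcess g lam : ℕ) : ℝ) + 1) *
      (exp 1 * ((7 * g + 9 / 2 * g * log g + 1) * lam ^ 2) / deviantBudget g lam) ^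
        deviantBudget g lam := by
  obtain ⟨-, -, hs⟩ := chainExcess_bounds hg hL
  obtain ⟨-, hM'⟩ := deviantBudget_bounds hg hL
  set R := lam + chainExcess g lam
  set M := deviantBudget g lam
  set C : ℝ := 7 * g + 9 / 2 * g * log g + 1 with hC
  have hlamR : (1 : ℝ) ≤ lam := by
    exact_mod_cast (by omega : 1 ≤ g).trans (Nat.log_pos_iff.1 hL).1
  have hLR : (1 : ℝ) ≤ Nat.log g lam := by exact_mod_cast hL
  have hgl : (0 : ℝ) ≤ 9 / 2 * g * log g := by positivity
  have hsq : (1 : ℝ) ≤ lam ^ 2 := by nlinarith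
  have hMX : (M : ℝ) ≤ C * lam ^ 2 := by
    have : 9 / 16 * (lam : ℝ) / Nat.log g lam ≤ lam :=
      div_le_of_le_mul₀ (by positivity) (by positivity) (by nlinarith)
    have : (lam : ℝ) ≤ lam ^ 2 := by nlinarith
    have hg1 : (1 : ℝ) ≤ 6 * g := by
      have : (3 : ℝ) ≤ g := by exact_mod_cast hg
      linarith
    nlinarith [mul_le_mul_of_nonneg_left hsq (by positivity : (0 : ℝ) ≤ g + 9 / 2 * g * log g + 1),
      mul_le_mul_of_nonneg_right hg1 (sq_nonneg (lam : ℝ))]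
  have hNX : ((R * g * (R + 1) : ℕ) : ℝ) ≤ C * lam ^ 2 := by
    have hR : (R : ℝ) ≤ 2 * lam := by exact_mod_cast (show R ≤ 2 * lam by omega)
    calc ((R * g * (R + 1) : ℕ) : ℝ) = R * g * (R + 1) := by push_cast; ring
      _ ≤ (2 * lam) * g * (3 * lam) := by gcongr; linarith
      _ ≤ C * lam ^ 2 := by nlinarith [mul_nonneg hgl (sq_nonneg (lam : ℝ))]
  calc (#(badSet g lam) : ℝ)
      ≤ (R + 1) * ∑ k ∈ range (M + 1), ((R * g * (R + 1)).choose k : ℝ) := by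
        exact_mod_cast card_badSet_le hg lam
    _ ≤ (R + 1) * (exp 1 * (C * lam ^ 2) / M) ^ M := by
        gcongr
        exact sum_range_choose_le_pow (by simp only [M, deviantBudget]; omega) hNX hMX

end Parameters

theorem exists_card_badSet_le_exp {g : ℕ} (hg : 3 ≤ g) : ∃ A B C : ℝ, ∀ lam : ℕ,
    1 ≤ Nat.log g lam → (#(badSet g lam) : ℝ) ≤
      exp (lam * (9 / 16 * log g + (A + 9 / 16 * log (Nat.log g lam)) / Nat.log g lam) +
        (B + C * log lam)) := by
  set D : ℝ := g + 9 / 2 * g * log g + 1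
  set K := 1 + log (7 * g + 9 / 2 * g * log g + 1) + log (16 / 9)
  refine ⟨9 / 16 * (log g + K), D * K + log 3, 2 * D + 1, fun lam hL => ?_⟩
  have hlamR : (1 : ℝ) ≤ lam := by
    exact_mod_cast (by omega : 1 ≤ g).trans (Nat.log_pos_iff.1 hL).1
  obtain ⟨-, -, hs⟩ := chainExcess_bounds hg hL
  obtain ⟨hM, hM'⟩ := deviantBudget_bounds hg hL
  have hloglam : log lam ≤ (Nat.log g lam + 1) * log g := by
    have : (lam : ℝ) ≤ (g : ℝ) ^ (Nat.log g lam + 1) := by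
      exact_mod_cast (Nat.lt_pow_succ_log_self (by omega) lam).le
    simpa [log_pow] using log_le_log (by positivity) this
  have hR : ((lam + chainExcess g lam : ℕ) : ℝ) ≤ 2 * lam := by
    exact_mod_cast (show lam + chainExcess g lam ≤ 2 * lam by omega)
  have hC : 1 ≤ 7 * (g : ℝ) + 9 / 2 * g * log g + 1 := by
    have : (0 : ℝ) ≤ 9 / 2 * g * log g := by positivity
    linarith
  have hM0 : (0 : ℝ) < deviantBudget g lam := by
    exact_mod_cast (show 0 < deviantBudget g lam by simp only [deviantBudget]; omega)
  calc (#(badSet g lam) : ℝ) ≤ _ := card_badSet_le_pow hg hL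
    _ = exp (log (((lam + chainExcess g lam : ℕ) : ℝ) + 1) + deviantBudget g lam *
          log (exp 1 * ((7 * g + 9 / 2 * g * log g + 1) * lam ^ 2) / deviantBudget g lam)) := by
      rw [exp_add, exp_log (by positivity), ← log_pow, exp_log (by positivity)]
    _ ≤ _ := exp_le_exp.2 <| log_add_mul_log_le hlamR (by exact_mod_cast hL)
      (by exact_mod_cast Nat.log_le_self g lam) hloglam (by positivity) hR hM hM' hC

theorem tendsto_card_badSet_div_pow {g : ℕ} (hg : 3 ≤ g) :
    Tendsto (fun lam => (#(badSet g lam) : ℝ) / g ^ lam) atTop (𝓝 0) := by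
  obtain ⟨A, B, C, hbound⟩ := exists_card_badSet_le_exp hg
  have hlog := one_le_log_of_three_le hg
  have hL : Tendsto (fun lam => (Nat.log g lam : ℝ)) atTop atTop :=
    tendsto_natCast_atTop_atTop.comp <| Filter.tendsto_atTop_atTop.2 fun K =>
      ⟨g ^ K, fun lam h => Nat.le_log_of_pow_le (by omega) h⟩
  have hsmall₁ := ((tendsto_const_add_mul_log_div_atTop A (9 / 16)).comp hL).eventually
    (gt_mem_nhds (show (0 : ℝ) < log g / 32 by positivity))
  have hsmall₂ := ((tendsto_const_add_mul_log_div_atTop B C).comp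
    tendsto_natCast_atTop_atTop).eventually
      (gt_mem_nhds (show (0 : ℝ) < log g / 32 by positivity))
  -- the exponent is eventually at most `(9 / 16 + 1 / 32 + 1 / 32) log g = 5 / 8 · log g`
  refine tendsto_div_pow_of_le_exp (c := 5 / 8 * log g) (by positivity) (by linarith)
    (fun _ => by positivity) ?_
  filter_upwards [hL.eventually_ge_atTop 1, hsmall₁, hsmall₂, eventually_gt_atTop 0]
    with lam hL1 h₁ h₂ hlam
  simp only [Function.comp] at h₁ h₂
  refine (hbound lam (by exact_mod_cast hL1)).trans (exp_le_exp.2 ?_)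
  have hlamR : (0 : ℝ) < lam := by exact_mod_cast hlam
  rw [div_lt_iff₀ hlamR] at h₂
  nlinarith

theorem card_filter_range_le {G : ℕ} (hG : 2 ≤ G) (p : ℕ → Prop) [DecidablePred p] (x : ℕ) :
    #((range x).filter p) ≤
      1 + ∑ k ∈ range (Nat.log G x + 1), #((Ico (G ^ k) (G ^ (k + 1))).filter p) := by
  have hsub : (range x).filter p ⊆ {0} ∪ (range (Nat.log G x + 1)).biUnion fun k =>
      (Ico (G ^ k) (G ^ (k + 1))).filter p := by
    intro y hy
    simp only [mem_filter, mem_range] at hy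
    rcases Nat.eq_zero_or_pos y with rfl | hy0
    · simp
    refine mem_union_right _ (mem_biUnion.2 ⟨Nat.log G y, ?_, ?_⟩)
    · exact mem_range.2 (Nat.lt_succ_of_le (Nat.log_mono_right hy.1.le))
    · exact mem_filter.2 ⟨mem_Ico.2 ⟨Nat.pow_log_le_self G hy0.ne',
        Nat.lt_pow_succ_log_self (by omega) y⟩, hy.2⟩
  calc #((range x).filter p) ≤ #({0} ∪ (range (Nat.log G x + 1)).biUnion fun k =>
        (Ico (G ^ k) (G ^ (k + 1))).filter p) := card_le_card hsub
    _ ≤ 1 + _ := (card_union_le _ _).trans (Nat.add_le_add_left card_biUnion_le 1)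

open Asymptotics in
theorem tendsto_card_filter_range_div_of_blocks {G : ℕ} (hG : 2 ≤ G) (p : ℕ → Prop)
    [DecidablePred p]
    (h : Tendsto (fun k => (#((Ico (G ^ k) (G ^ (k + 1))).filter p) : ℝ) / G ^ k) atTop (𝓝 0)) :
    Tendsto (fun x => (#((range x).filter p) : ℝ) / x) atTop (𝓝 0) := by
  set f : ℕ → ℝ := fun k => #((Ico (G ^ k) (G ^ (k + 1))).filter p)
  have hGpos : (0 : ℝ) < G := by positivity
  have hf : f =o[atTop] fun k => (G : ℝ) ^ k :=
    (isLittleO_iff_tendsto fun k hk => absurd hk (by positivity)).2 h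
  have hgeom : ∀ n, ∑ k ∈ range n, (G : ℝ) ^ k ≤ G ^ n := fun n => by
    have : ∑ k ∈ range n, G ^ k ≤ G ^ n :=
      (Nat.geomSum_eq hG n).le.trans (Nat.div_le_self _ _ |>.trans (Nat.sub_le _ _))
    exact_mod_cast this
  have hsum : (fun n => ∑ k ∈ range n, f k) =o[atTop] fun n => (G : ℝ) ^ n := by
    refine (hf.sum_range (fun k => by positivity) ?_).trans_isBigO
      (isBigO_of_le _ fun n => ?_)
    · refine tendsto_atTop_mono (fun n => ?_) tendsto_natCast_atTop_atTop
      simpa using sum_le_sum fun k (_ : k ∈ range n) => one_le_pow₀ (one_le_two.trans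
        (by exact_mod_cast hG : (2 : ℝ) ≤ G))
    · rw [Real.norm_of_nonneg (sum_nonneg fun k _ => by positivity),
        Real.norm_of_nonneg (by positivity)]
      exact hgeom n
  set n : ℕ → ℕ := fun x => Nat.log G x + 1
  have hn : Tendsto n atTop atTop := Filter.tendsto_atTop_atTop.2 fun K =>
    ⟨G ^ K, fun x hx => (Nat.le_log_of_pow_le (by omega) hx).trans (Nat.le_succ _)⟩
  have hpow : (fun x => (G : ℝ) ^ n x) =O[atTop] fun x => (x : ℝ) := by
    refine isBigO_iff.2 ⟨G, eventually_atTop.2 ⟨1, fun x hx => ?_⟩⟩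
    rw [Real.norm_of_nonneg (by positivity), Real.norm_of_nonneg (by positivity), pow_succ,
      mul_comm]
    gcongr
    exact_mod_cast Nat.pow_log_le_self G (by omega)
  have hbound : (fun x => 1 + ∑ k ∈ range (n x), f k) =o[atTop] fun x => (x : ℝ) :=
    ((isLittleO_const_left.2 (Or.inr (tendsto_norm_atTop_atTop.comp tendsto_natCast_atTop_atTop))).add
      ((hsum.comp_tendsto hn).trans_isBigO hpow))
  refine squeeze_zero (fun x => by positivity) (fun x => ?_) hbound.tendsto_div_nhds_zero
  gcongr
  simp only [f]
  exact_mod_cast card_filter_range_le hG p x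

open Classical in
/-- for an integer `g ≥ 3`, almost all positive integers `n` satisfy
`l_g(n) ≥ λ_g(n) + λ_g(n) / (8 g ln g · λ_g(λ_g(n)))`: the proportion of positive
integers `n < x` failing this inequality tends to `0` as `x → ∞`. -/
theorem gAddChainLength_lower_bound_density (g : ℕ) (hg : 3 ≤ g) :
    Filter.Tendsto (fun x : ℕ =>
      (((Finset.range x).filter (fun n : ℕ => 1 ≤ n ∧
          ¬ ((Nat.log g n : ℝ) +
              (Nat.log g n : ℝ) /
                (8 * (g : ℝ) * Real.log g * (Nat.log g (Nat.log g n) : ℝ))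
            ≤ (gAddChainLength g n : ℝ)))).card : ℝ) / (x : ℝ))
      Filter.atTop (nhds 0) := by
  refine tendsto_card_filter_range_div_of_blocks (G := g) (by omega) _ <|
    (tendsto_card_badSet_div_pow hg).congr fun lam => ?_
  congr 3
  refine filter_congr fun n hn => ?_
  obtain ⟨hlo, hhi⟩ := mem_Ico.1 hn
  rw [Nat.log_eq_of_pow_le_of_lt_pow hlo hhi, not_le]
  exact ⟨fun h => ⟨(Nat.one_le_pow lam g (by omega)).trans hlo, h⟩, And.right⟩
end
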